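/- Define φ₁(θ₁,θ₂) = (1/3)(e^{2πiθ₁} + e^{−2πiθ₂} + e^{2πi(θ₂−θ₁)}) for real θ₁, θ₂, and let Δ = { φ₁(θ) : θ ∈ ℝ² }. Then Δ = { x+iy ∈ ℂ : 3(x²+y²+1)² + 8(−x³+3xy²) ≤ 4 }. -/

import Mathlib

open Complex

/-- The first component of the generalized cosine for the root system `A₂`. -/
noncomputable def phi1 (θ : ℝ × ℝ) : ℂ :=
  (1 / 3) * (Complex.exp (2 * Real.pi * Complex.I * θ.1) +
    Complex.exp (-(2 * Real.pi * Complex.I * θ.2)) +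
    Complex.exp (2 * Real.pi * Complex.I * (θ.2 - θ.1)))

/-!
With `u = e(θ₁)`, `v = e(-θ₂)`, `w = e(θ₂ - θ₁)`, the points of `Δ` are the numbers
`z = (u + v + w) / 3` with `u, v, w` on the unit circle and `uvw = 1`, i.e. the `z` for which all
roots of `X³ - 3z X² + 3z̄ X - 1` lie on the unit circle. The discriminant
`((u - v)(v - w)(w - u))²` of this cubic is `27 (q(z) - 4)`, where `q = deltoidQuartic` is the
quartic of the deltoid. For unimodular roots `(u - v)(v - w)(w - u)` is purely imaginary, so
`q(z) ≤ 4`. Conversely, the roots are permuted by `x ↦ 1 / x̄`: a root `u` off the circle comes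
with the roots `1 / ū` and `ū / u`, and for these `(u - v)(v - w)(w - u)` is real and nonzero,
so `q(z) > 4`.
-/

open ComplexConjugate

open Polynomial in
theorem exists_cubic_vieta (a b c : ℂ) :
    ∃ u v w : ℂ, u + v + w = a ∧ u * v + v * w + w * u = b ∧ u * v * w = c := by
  obtain ⟨u, hu⟩ : ∃ u : ℂ, u ^ 3 - a * u ^ 2 + b * u - c = 0 := by
    have hdeg : 0 < (X ^ 3 - C a * X ^ 2 + C b * X - C c : ℂ[X]).degree := by
      rw [show (X ^ 3 - C a * X ^ 2 + C b * X - C c : ℂ[X]).degree = 3 by compute_degree!]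
      decide
    obtain ⟨u, hu⟩ := Complex.exists_root hdeg
    exact ⟨u, by simpa using hu⟩
  obtain ⟨d, hd⟩ := IsAlgClosed.exists_eq_mul_self ((a - u) ^ 2 - 4 * (u ^ 2 - a * u + b))
  refine ⟨u, (a - u + d) / 2, (a - u - d) / 2, by ring, ?_, ?_⟩
  · linear_combination (1 / 4 : ℂ) * hd
  · linear_combination (u / 4) * hd + hu

theorem sq_prod_sub_eq_discr {u v w s p q : ℂ} (hs : u + v + w = s)
    (hp : u * v + v * w + w * u = p) (hq : u * v * w = q) :
    ((u - v) * (v - w) * (w - u)) ^ 2 =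
      s ^ 2 * p ^ 2 - 4 * p ^ 3 - 4 * s ^ 3 * q + 18 * s * p * q - 27 * q ^ 2 := by
  subst hs hp hq
  ring

theorem re_sq_nonpos_of_conj_eq_neg {k : ℂ} (hk : conj k = -k) : (k ^ 2).re ≤ 0 := by
  have hre : k.re = 0 := by
    have := congrArg re hk
    simp only [conj_re, neg_re] at this
    linarith
  simpa [sq, hre] using mul_self_nonneg k.im

theorem re_sq_pos_of_conj_eq {k : ℂ} (hk : conj k = k) (hk0 : k ≠ 0) : 0 < (k ^ 2).re := by
  have him : k.im = 0 := conj_eq_iff_im.mp hk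
  have hre : k.re ≠ 0 := fun h => hk0 (Complex.ext h him)
  simpa [sq, him] using mul_self_pos.mpr hre

noncomputable def deltoidQuartic (z : ℂ) : ℝ :=
  3 * (z.re ^ 2 + z.im ^ 2 + 1) ^ 2 + 8 * (-(z.re ^ 3) + 3 * z.re * z.im ^ 2)

theorem ofReal_deltoidQuartic (z : ℂ) :
    (deltoidQuartic z : ℂ) = 3 * (z * conj z + 1) ^ 2 - 4 * (z ^ 3 + conj z ^ 3) := by
  have hnorm : z * conj z = ((z.re ^ 2 + z.im ^ 2 : ℝ) : ℂ) := by
    rw [mul_conj, normSq_apply]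
    push_cast
    ring
  have hcube : z ^ 3 + conj z ^ 3 = ((2 * (z.re ^ 3 - 3 * z.re * z.im ^ 2) : ℝ) : ℂ) := by
    rw [← map_pow, add_conj]
    simp [pow_succ, mul_re, mul_im]
    ring
  rw [hnorm, hcube, deltoidQuartic]
  push_cast
  ring

theorem sq_prod_sub_eq_deltoidQuartic {z u v w : ℂ} (hs : u + v + w = 3 * z)
    (hp : u * v + v * w + w * u = 3 * conj z) (hq : u * v * w = 1) :
    ((u - v) * (v - w) * (w - u)) ^ 2 = ((27 * (deltoidQuartic z - 4) : ℝ) : ℂ) := by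
  rw [sq_prod_sub_eq_discr hs hp hq]
  push_cast
  rw [ofReal_deltoidQuartic]
  ring

theorem Circle.conj_coe (x : Circle) : conj (x : ℂ) = (x : ℂ)⁻¹ := by
  rw [← Circle.coe_inv_eq_conj, Circle.coe_inv]

theorem Circle.coe_eq_inv_mul_inv {u v w : Circle} (h : u * v * w = 1) :
    (w : ℂ) = (u : ℂ)⁻¹ * (v : ℂ)⁻¹ := by
  rw [eq_inv_of_mul_eq_one_right h, Circle.coe_inv, Circle.coe_mul, mul_inv]

theorem conj_add_of_circle {u v w : Circle} (h : u * v * w = 1) :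
    conj ((u : ℂ) + v + w) = u * v + v * w + w * u := by
  rw [Circle.coe_eq_inv_mul_inv h]
  simp only [map_add, map_mul, map_inv₀, Circle.conj_coe, inv_inv]
  field_simp
  ring

theorem conj_prod_sub_of_circle {u v w : Circle} (h : u * v * w = 1) :
    conj (((u : ℂ) - v) * (v - w) * (w - u)) = -(((u : ℂ) - v) * (v - w) * (w - u)) := by
  rw [Circle.coe_eq_inv_mul_inv h]
  simp only [map_mul, map_sub, map_inv₀, Circle.conj_coe, inv_inv]
  field_simp
  ring

theorem deltoidQuartic_le_of_circle {z : ℂ} {u v w : Circle} (h : u * v * w = 1)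
    (hz : 3 * z = u + v + w) : deltoidQuartic z ≤ 4 := by
  have hp : (u : ℂ) * v + v * w + w * u = 3 * conj z := by
    rw [← conj_add_of_circle h, ← hz, map_mul, map_ofNat]
  have hq : (u : ℂ) * v * w = 1 := by
    rw [← Circle.coe_mul, ← Circle.coe_mul, h, Circle.coe_one]
  have hre := re_sq_nonpos_of_conj_eq_neg (conj_prod_sub_of_circle h)
  rw [sq_prod_sub_eq_deltoidQuartic hz.symm hp hq, ofReal_re] at hre
  linarith

theorem norm_eq_one_of_inv_conj_eq {u v w : ℂ} (hv : (conj u)⁻¹ = v) (hq : u * v * w = 1)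
    (hk : (((u - v) * (v - w) * (w - u)) ^ 2).re ≤ 0) : ‖u‖ = 1 := by
  by_contra hu1
  subst hv
  have hu0 : u ≠ 0 := left_ne_zero_of_mul (left_ne_zero_of_mul_eq_one hq)
  have hcu0 : conj u ≠ 0 := (_root_.map_ne_zero _).mpr hu0
  have hw : w = conj u / u := by
    field_simp at hq ⊢
    linear_combination hq
  subst hw
  have hreal : conj ((u - (conj u)⁻¹) * ((conj u)⁻¹ - conj u / u) * (conj u / u - u)) =
      (u - (conj u)⁻¹) * ((conj u)⁻¹ - conj u / u) * (conj u / u - u) := by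
    simp only [map_mul, map_sub, map_inv₀, map_div₀, conj_conj]
    field_simp
  have hpos : 0 < ‖u‖ := norm_pos_iff.mpr hu0
  have hinv : ‖u‖⁻¹ ≠ ‖u‖ := fun h => hu1 (by field_simp at h; nlinarith)
  have h1 : u - (conj u)⁻¹ ≠ 0 :=
    sub_ne_zero.mpr (ne_of_apply_ne norm (by simpa using hinv.symm))
  have h2 : (conj u)⁻¹ - conj u / u ≠ 0 :=
    sub_ne_zero.mpr (ne_of_apply_ne norm (by simpa [hu0] using hu1))
  have h3 : conj u / u - u ≠ 0 :=
    sub_ne_zero.mpr (ne_of_apply_ne norm (by simpa [hu0] using Ne.symm hu1))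
  exact (re_sq_pos_of_conj_eq hreal (mul_ne_zero (mul_ne_zero h1 h2) h3)).not_ge hk

theorem norm_eq_one_of_vieta {s u v w : ℂ} (hs : u + v + w = s)
    (hp : u * v + v * w + w * u = conj s) (hq : u * v * w = 1)
    (hk : (((u - v) * (v - w) * (w - u)) ^ 2).re ≤ 0) : ‖u‖ = 1 := by
  have hu0 : u ≠ 0 := left_ne_zero_of_mul (left_ne_zero_of_mul_eq_one hq)
  have hcu0 : conj u ≠ 0 := (_root_.map_ne_zero _).mpr hu0
  have hcubic (x : ℂ) : (x - u) * (x - v) * (x - w) = x ^ 3 - s * x ^ 2 + conj s * x - 1 := by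
    linear_combination (-x ^ 2) * hs + x * hp - hq
  have hroot : conj u ^ 3 - conj s * conj u ^ 2 + s * conj u - 1 = 0 := by
    have h : u ^ 3 - s * u ^ 2 + conj s * u - 1 = 0 := by rw [← hcubic]; ring
    simpa only [map_sub, map_add, map_mul, map_pow, conj_conj, map_one, map_zero]
      using congrArg conj h
  have hinv_root : ((conj u)⁻¹ - u) * ((conj u)⁻¹ - v) * ((conj u)⁻¹ - w) = 0 := by
    rw [hcubic]
    field_simp
    linear_combination -hroot
  rcases mul_eq_zero.mp hinv_root with hinv_root | hw
  · rcases mul_eq_zero.mp hinv_root with hu | hv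
    · have h := inv_mul_cancel₀ hcu0
      rw [sub_eq_zero.mp hu, mul_conj', ← ofReal_pow, ofReal_eq_one] at h
      exact (pow_eq_one_iff_of_nonneg (norm_nonneg u) two_ne_zero).mp h
    · exact norm_eq_one_of_inv_conj_eq (sub_eq_zero.mp hv) hq hk
  · refine norm_eq_one_of_inv_conj_eq (w := v) (sub_eq_zero.mp hw) (by linear_combination hq) ?_
    rwa [show ((u - w) * (w - v) * (v - u)) ^ 2 = ((u - v) * (v - w) * (w - u)) ^ 2 by ring]

theorem exists_circle_of_deltoidQuartic_le {z : ℂ} (hz : deltoidQuartic z ≤ 4) :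
    ∃ u v w : Circle, u * v * w = 1 ∧ 3 * z = u + v + w := by
  obtain ⟨u, v, w, hs, hp, hq⟩ := exists_cubic_vieta (3 * z) (3 * conj z) 1
  have hp' : u * v + v * w + w * u = conj (3 * z) := by rw [hp, map_mul, map_ofNat]
  have hk : (((u - v) * (v - w) * (w - u)) ^ 2).re ≤ 0 := by
    rw [sq_prod_sub_eq_deltoidQuartic hs hp hq, ofReal_re]
    linarith
  have hu := norm_eq_one_of_vieta hs hp' hq hk
  have hv := norm_eq_one_of_vieta (s := 3 * z) (u := v) (v := w) (w := u)
    (by linear_combination hs) (by linear_combination hp') (by linear_combination hq)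
    (by convert hk using 3; ring)
  have hw := norm_eq_one_of_vieta (s := 3 * z) (u := w) (v := u) (w := v)
    (by linear_combination hs) (by linear_combination hp') (by linear_combination hq)
    (by convert hk using 3; ring)
  exact ⟨⟨u, mem_sphere_zero_iff_norm.mpr hu⟩, ⟨v, mem_sphere_zero_iff_norm.mpr hv⟩,
    ⟨w, mem_sphere_zero_iff_norm.mpr hw⟩, Circle.ext hq, hs.symm⟩

theorem deltoidQuartic_le_iff (z : ℂ) :
    deltoidQuartic z ≤ 4 ↔ ∃ u v w : Circle, u * v * w = 1 ∧ 3 * z = u + v + w :=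
  ⟨exists_circle_of_deltoidQuartic_le, fun ⟨_, _, _, h, hz⟩ => deltoidQuartic_le_of_circle h hz⟩

open Real

theorem Real.fourierChar_surjective : Function.Surjective fourierChar := fun x => by
  obtain ⟨t, rfl⟩ := Circle.exp_surjective x
  exact ⟨t / (2 * π), by rw [fourierChar_apply']; congr 1; field_simp⟩

theorem three_mul_phi1 (θ : ℝ × ℝ) :
    3 * phi1 θ = fourierChar θ.1 + fourierChar (-θ.2) + fourierChar (θ.2 - θ.1) := by
  simp only [phi1, fourierChar_apply]
  push_cast
  ring_nf

theorem exists_phi1_eq_iff (z : ℂ) :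
    (∃ θ : ℝ × ℝ, z = phi1 θ) ↔ ∃ u v w : Circle, u * v * w = 1 ∧ 3 * z = u + v + w := by
  constructor
  · rintro ⟨θ, rfl⟩
    refine ⟨fourierChar θ.1, fourierChar (-θ.2), fourierChar (θ.2 - θ.1), ?_, three_mul_phi1 θ⟩
    rw [← AddChar.map_add_eq_mul, ← AddChar.map_add_eq_mul, ← AddChar.map_zero_eq_one fourierChar]
    congr 1
    ring
  · rintro ⟨u, v, w, h, hz⟩
    obtain ⟨a, rfl⟩ := fourierChar_surjective u
    obtain ⟨b, rfl⟩ := fourierChar_surjective v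
    have hw : w = fourierChar (-b - a) := by
      rw [eq_inv_of_mul_eq_one_right h, ← AddChar.map_add_eq_mul, ← AddChar.map_neg_eq_inv]
      congr 1
      ring
    refine ⟨(a, -b), mul_left_cancel₀ three_ne_zero ?_⟩
    rw [hz, three_mul_phi1, hw, neg_neg]

/-- The image `Δ` of the generalized cosine is the region bounded by the Steiner
hypocycloid: `Δ = { x+iy : 3(x²+y²+1)² + 8(−x³+3xy²) ≤ 4 }`. -/
theorem deltoid_region_eq :
    {z : ℂ | ∃ θ : ℝ × ℝ, z = phi1 θ} =
      {z : ℂ | 3 * (z.re ^ 2 + z.im ^ 2 + 1) ^ 2 +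
        8 * (-(z.re ^ 3) + 3 * z.re * z.im ^ 2) ≤ 4} := by
  ext z
  exact (exists_phi1_eq_iff z).trans (deltoidQuartic_le_iff z).symm
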